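/- Let F be a 3-CNF formula with n variables x_1, …, x_n and m clauses C_1, …, C_m, each clause containing exactly three literals. Define identical valuations over 2n+2 goods: v(t_i) = 5^{m+n−i} + Σ_{j : x_i ∈ C_j} 5^{m−j}, v(f_i) = 5^{m+n−i} + Σ_{j : ¬x_i ∈ C_j} 5^{m−j}, v(r) = Σ_{j∈[m]} 5^{j−1}, and v(s) = Σ_{i∈[n]} 5^{m+i−1} + 2·Σ_{j∈[m]} 5^{j−1}. Then there exists a truth assignment making exactly one literal true in each clause of F if and only if the goods can be partitioned into three bundles of equal total value. -/

import Mathlib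

open Finset

/-!
Read every good as a base-5 number with one digit per clause and one per variable. At a
variable digit `t_i, f_i, s` contribute `1` each; at a clause digit its three distinct literals
contribute `1` each, `s` contributes `2` and `r` contributes `1`. These column totals `3` and `6`
are three times digits below `5`, so comparing top digits first shows that three bundles of equal
value each have digit `1` at every variable and `2` at every clause. In the bundle of `r`, the
clause digit then excludes `s`, the variable digit says that exactly one of `t_i, f_i` lies there
(this is the value of `x_i`), and the clause digit says that exactly one literal of each clause
lies there. Conversely `{s}`, `r` with the true literals, and the false literals are three
bundles with these digits.
-/

/-- The goods: `Sum.inl (i, true)` is `t_i`, `Sum.inl (i, false)` is `f_i`,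
`Sum.inr true` is `s`, and `Sum.inr false` is `r`. -/
abbrev SatItem (n : ℕ) := (Fin n × Bool) ⊕ Bool

/-- The common valuation, built from a 3-CNF with clause literals
`lit j 0, lit j 1, lit j 2` (a literal is a variable together with its sign). -/
noncomputable def satVal (n m : ℕ) (lit : Fin m → Fin 3 → Fin n × Bool) :
    SatItem n → ℝ
  | Sum.inl (i, b) =>
      (5 : ℝ) ^ (m + n - 1 - i.val) +
        ∑ j : Fin m, (if ∃ k : Fin 3, lit j k = (i, b) then (5 : ℝ) ^ (m - 1 - j.val) else 0)
  | Sum.inr true =>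
      (∑ i : Fin n, (5 : ℝ) ^ (m + i.val)) + 2 * ∑ j : Fin m, (5 : ℝ) ^ j.val
  | Sum.inr false => ∑ j : Fin m, (5 : ℝ) ^ j.val

section Digits
variable {κ : Type*} {B N : ℕ} {e : κ → ℕ}

theorem sum_mul_pow_lt_pow (hB : 0 < B) (he : Function.Injective e) (d : κ → ℕ) (s : Finset κ)
    (hd : ∀ x ∈ s, d x < B) (hs : ∀ x ∈ s, e x < N) :
    ∑ x ∈ s, d x * B ^ e x < B ^ N := by
  classical
  induction s using Finset.induction_on_max_value e generalizing N with
  | empty => simpa using pow_pos hB N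
  | insert y s hy hmax ih =>
    have hlt : ∑ x ∈ s, d x * B ^ e x < B ^ e y := by
      refine ih (fun x hx => hd x (mem_insert_of_mem hx)) fun x hx => ?_
      exact lt_of_le_of_ne (hmax x hx) fun h => hy (he h ▸ hx)
    have hdy : d y + 1 ≤ B := hd y (mem_insert_self y s)
    calc ∑ x ∈ insert y s, d x * B ^ e x
        = d y * B ^ e y + ∑ x ∈ s, d x * B ^ e x := sum_insert hy
      _ < (d y + 1) * B ^ e y := by linarith
      _ ≤ B ^ (e y + 1) := by rw [pow_succ']; exact Nat.mul_le_mul_right _ hdy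
      _ ≤ B ^ N := Nat.pow_le_pow_right hB (hs y (mem_insert_self y s))

theorem digits_eq_of_sum_mul_pow_eq {ι : Type*} [Fintype ι] (he : Function.Injective e)
    (c : ι → κ → ℕ) (d : κ → ℕ) (s : Finset κ) (hd : ∀ x ∈ s, d x < B)
    (hcol : ∀ x ∈ s, ∑ a, c a x = Fintype.card ι * d x)
    (hval : ∀ a, ∑ x ∈ s, c a x * B ^ e x = ∑ x ∈ s, d x * B ^ e x) :
    ∀ a, ∀ x ∈ s, c a x = d x := by
  classical
  induction s using Finset.induction_on_max_value e with
  | empty => simp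
  | insert y s hy hmax ih =>
    have hdy := hd y (mem_insert_self y s)
    have hlow : ∑ x ∈ s, d x * B ^ e x < B ^ e y :=
      sum_mul_pow_lt_pow (by omega) he d s (fun x hx => hd x (mem_insert_of_mem hx))
        fun x hx => lt_of_le_of_ne (hmax x hx) fun h => hy (he h ▸ hx)
    have hval' : ∀ a, c a y * B ^ e y + ∑ x ∈ s, c a x * B ^ e x =
        d y * B ^ e y + ∑ x ∈ s, d x * B ^ e x := by
      simpa only [sum_insert hy] using hval
    -- the lower digits of `d` are worth less than one unit of the top digit
    have htop_le : ∀ a, c a y ≤ d y := by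
      intro a
      by_contra! h
      have := Nat.mul_le_mul_right (B ^ e y) (show d y + 1 ≤ c a y from h)
      rw [add_one_mul] at this
      linarith [hval' a, Nat.zero_le (∑ x ∈ s, c a x * B ^ e x)]
    have htop : ∀ a, c a y = d y := fun a =>
      (sum_eq_sum_iff_of_le fun a _ => htop_le a).1
        (by simp [hcol y (mem_insert_self y s)]) a (mem_univ a)
    intro a x hx
    rcases mem_insert.1 hx with rfl | hx
    · exact htop a
    · refine ih (fun x hx => hd x (mem_insert_of_mem hx))
        (fun x hx => hcol x (mem_insert_of_mem hx)) (fun b => ?_) a x hx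
      have := hval' b
      rw [htop b] at this
      omega

theorem digits_eq_of_sum_mul_pow_eq_of_forall_eq {ι : Type*} [Fintype ι] [Nonempty ι]
    (he : Function.Injective e) (c : ι → κ → ℕ) (d : κ → ℕ) (s : Finset κ)
    (hd : ∀ x ∈ s, d x < B) (hcol : ∀ x ∈ s, ∑ a, c a x = Fintype.card ι * d x)
    (hval : ∀ a b, ∑ x ∈ s, c a x * B ^ e x = ∑ x ∈ s, c b x * B ^ e x) :
    ∀ a, ∀ x ∈ s, c a x = d x := by
  refine digits_eq_of_sum_mul_pow_eq he c d s hd hcol fun a => ?_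
  have htotal :
      ∑ b, ∑ x ∈ s, c b x * B ^ e x = Fintype.card ι * ∑ x ∈ s, d x * B ^ e x := by
    rw [sum_comm, mul_sum]
    refine sum_congr rfl fun x hx => ?_
    rw [← sum_mul, hcol x hx, mul_assoc]
  simp only [hval _ a, sum_const, card_univ, smul_eq_mul] at htotal
  exact Nat.eq_of_mul_eq_mul_left Fintype.card_pos htotal

end Digits

section Reduction
variable {n m : ℕ} (lit : Fin m → Fin 3 → Fin n × Bool)

def satExp (n m : ℕ) : Fin m ⊕ Fin n → ℕ
  | .inl j => m - 1 - j
  | .inr i => m + n - 1 - i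

def satDigit : SatItem n → Fin m ⊕ Fin n → ℕ
  | .inl l, .inl j => if ∃ k, lit j k = l then 1 else 0
  | .inl l, .inr i => if l.1 = i then 1 else 0
  | .inr true, .inl _ => 2
  | .inr true, .inr _ => 1
  | .inr false, .inl _ => 1
  | .inr false, .inr _ => 0

def targetDigit : Fin m ⊕ Fin n → ℕ
  | .inl _ => 2
  | .inr _ => 1

theorem satExp_injective : Function.Injective (satExp n m) := by
  rintro (j | i) (j' | i') h <;> simp only [satExp] at h <;> grind

theorem satVal_eq_sum_satDigit (o : SatItem n) :
    satVal n m lit o = ∑ x, (satDigit lit o x : ℝ) * 5 ^ satExp n m x := by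
  rcases o with ⟨i, b⟩ | _ | _
  · simp [satVal, satDigit, satExp, Fintype.sum_sum_type, add_comm]
  · have hrev := Equiv.sum_comp Fin.revPerm (fun j : Fin m => (5 : ℝ) ^ (j : ℕ))
    simp only [satVal, ← hrev, Fin.revPerm_apply, Fin.val_rev, satDigit, satExp,
      Fintype.sum_sum_type, Nat.cast_one, one_mul, Nat.cast_zero, zero_mul, sum_const_zero,
      add_zero]
    refine sum_congr rfl fun j _ => ?_
    grind
  · have hrev := Equiv.sum_comp Fin.revPerm (fun j : Fin m => (5 : ℝ) ^ (j : ℕ))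
    have hrev' := Equiv.sum_comp Fin.revPerm (fun i : Fin n => (5 : ℝ) ^ (m + i : ℕ))
    simp only [satVal, ← hrev, ← hrev', Fin.revPerm_apply, Fin.val_rev, satDigit, satExp,
      Fintype.sum_sum_type, Nat.cast_ofNat, Nat.cast_one, one_mul]
    rw [mul_sum, add_comm]
    congr 1 <;> refine sum_congr rfl fun x _ => ?_ <;> grind

def bundleDigit (P : SatItem n → Fin 3) (a : Fin 3) (x : Fin m ⊕ Fin n) : ℕ :=
  ∑ o ∈ univ.filter (fun o => P o = a), satDigit lit o x

theorem sum_filter_satVal (P : SatItem n → Fin 3) (a : Fin 3) :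
    ∑ o ∈ univ.filter (fun o => P o = a), satVal n m lit o =
      ((∑ x, bundleDigit lit P a x * 5 ^ satExp n m x : ℕ) : ℝ) := by
  simp only [satVal_eq_sum_satDigit, bundleDigit]
  rw [sum_comm]
  push_cast
  simp only [sum_mul]

theorem card_filter_and_exists_apply_eq {α β : Type*} [Fintype α] [Fintype β]
    {g : β → α} (hg : Function.Injective g) (p : α → Prop) [DecidablePred p]
    [DecidablePred fun x => ∃ k, g k = x] :
    #{x | p x ∧ ∃ k, g k = x} = #{k | p (g k)} := by
  rw [← card_map ⟨g, hg⟩]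
  congr 1
  ext x
  simp only [mem_filter, mem_univ, true_and, mem_map, Function.Embedding.coeFn_mk]
  exact ⟨fun ⟨hx, k, hk⟩ => ⟨k, hk ▸ hx, hk⟩,
    fun ⟨k, hk, hkx⟩ => ⟨hkx ▸ hk, k, hkx⟩⟩

theorem sum_satDigit (hlit : ∀ j, Function.Injective (lit j)) (x : Fin m ⊕ Fin n) :
    ∑ o, satDigit lit o x = 3 * targetDigit x := by
  rcases x with j | i
  · simp [satDigit, targetDigit, Fintype.sum_sum_type, card_image_of_injective _ (hlit j)]
  · simp only [satDigit, targetDigit, Fintype.sum_sum_type, Fintype.sum_prod_type,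
      Fintype.sum_bool]
    simp [sum_add_distrib]

theorem sum_bundleDigit (hlit : ∀ j, Function.Injective (lit j)) (P : SatItem n → Fin 3)
    (x : Fin m ⊕ Fin n) : ∑ a, bundleDigit lit P a x = 3 * targetDigit x := by
  rw [← sum_satDigit lit hlit, ← sum_fiberwise univ P]
  rfl

theorem bundleDigit_inl (P : SatItem n → Fin 3) (a : Fin 3) {j : Fin m}
    (hj : Function.Injective (lit j)) :
    bundleDigit lit P a (.inl j) =
      (∑ k, if P (.inl (lit j k)) = a then 1 else 0) + 2 * (if P (.inr true) = a then 1 else 0) +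
        (if P (.inr false) = a then 1 else 0) := by
  simp only [bundleDigit, sum_filter, Fintype.sum_sum_type, Fintype.sum_bool, satDigit,
    ← ite_and, sum_boole, Nat.cast_id]
  rw [card_filter_and_exists_apply_eq hj (fun x => P (.inl x) = a)]
  split_ifs <;> omega

theorem bundleDigit_inr (P : SatItem n → Fin 3) (a : Fin 3) (i : Fin n) :
    bundleDigit lit P a (.inr i) =
      (if P (.inl (i, true)) = a then 1 else 0) + (if P (.inl (i, false)) = a then 1 else 0) +
        (if P (.inr true) = a then 1 else 0) := by
  simp only [bundleDigit, sum_filter, Fintype.sum_sum_type, Fintype.sum_prod_type,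
    Fintype.sum_bool, satDigit, ← ite_and, and_comm]
  simp [ite_and, sum_add_distrib]

def assignmentPartition (α : Fin n → Bool) : SatItem n → Fin 3
  | .inl l => if α l.1 = l.2 then 1 else 2
  | .inr true => 0
  | .inr false => 1

theorem bundleDigit_assignmentPartition (hlit : ∀ j, Function.Injective (lit j))
    {α : Fin n → Bool} (hα : ∀ j, ∃! k, α (lit j k).1 = (lit j k).2) (a : Fin 3)
    (x : Fin m ⊕ Fin n) : bundleDigit lit (assignmentPartition α) a x = targetDigit x := by
  rcases x with j | i
  · obtain ⟨k₀, hk₀, hunique⟩ := hα j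
    have htrue : ∀ k, α (lit j k).1 = (lit j k).2 ↔ k = k₀ :=
      fun k => ⟨hunique k, fun h => h ▸ hk₀⟩
    rw [bundleDigit_inl lit _ a (hlit j)]
    have hcount : ∀ a k₀ : Fin 3,
        (∑ k : Fin 3, if (if k = k₀ then 1 else 2) = a then 1 else 0) +
          2 * (if (0 : Fin 3) = a then 1 else 0) + (if (1 : Fin 3) = a then 1 else 0) = 2 := by
      decide
    simp only [assignmentPartition, targetDigit, htrue]
    exact hcount a k₀
  · rw [bundleDigit_inr]
    cases h : α i <;> fin_cases a <;> simp [assignmentPartition, targetDigit, h]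

theorem exists_assignment_of_bundleDigit_eq (hlit : ∀ j, Function.Injective (lit j))
    (P : SatItem n → Fin 3) (hP : ∀ a x, bundleDigit lit P a x = targetDigit x) :
    ∃ α : Fin n → Bool, ∀ j, ∃! k, α (lit j k).1 = (lit j k).2 := by
  refine ⟨fun i => decide (P (.inl (i, true)) = P (.inr false)), fun j => ?_⟩
  have hclause := hP (P (.inr false)) (.inl j)
  rw [bundleDigit_inl lit P _ (hlit j)] at hclause
  simp only [targetDigit, sum_boole, Nat.cast_id, if_true] at hclause
  have hsr : P (.inr true) ≠ P (.inr false) := by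
    intro h
    simp only [h, if_true] at hclause
    omega
  have hliteral : ∀ l : Fin n × Bool,
      P (.inl l) = P (.inr false) ↔ decide (P (.inl (l.1, true)) = P (.inr false)) = l.2 := by
    rintro ⟨i, b⟩
    have hvar := hP (P (.inr false)) (.inr i)
    rw [bundleDigit_inr, if_neg hsr] at hvar
    cases b <;> simp only [targetDigit] at hvar <;> split_ifs at hvar <;> simp_all
  simp only [← hliteral, Fintype.existsUnique_iff_card_one]
  simp only [if_neg hsr] at hclause
  omega

end Reduction

/-- There is a truth assignment making exactly one literal true in each clause iff
the goods can be partitioned into three bundles of equal total value. -/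
theorem stmt11 (n m : ℕ) (lit : Fin m → Fin 3 → Fin n × Bool)
    (hdistinct : ∀ j, Function.Injective (lit j)) :
    (∃ α : Fin n → Bool, ∀ j : Fin m,
        ∃! k : Fin 3, α (lit j k).1 = (lit j k).2) ↔
    (∃ P : SatItem n → Fin 3, ∀ a b : Fin 3,
        ∑ o ∈ Finset.univ.filter (fun o => P o = a), satVal n m lit o =
          ∑ o ∈ Finset.univ.filter (fun o => P o = b), satVal n m lit o) := by
  constructor
  · rintro ⟨α, hα⟩
    refine ⟨assignmentPartition α, fun a b => ?_⟩
    simp only [sum_filter_satVal, bundleDigit_assignmentPartition lit hdistinct hα]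
  · rintro ⟨P, hP⟩
    refine exists_assignment_of_bundleDigit_eq lit hdistinct P fun a x => ?_
    refine digits_eq_of_sum_mul_pow_eq_of_forall_eq (B := 5) satExp_injective (bundleDigit lit P)
      targetDigit univ (fun x _ => ?_) (fun x _ => ?_) (fun a b => ?_) a x (mem_univ x)
    · cases x <;> simp [targetDigit]
    · simpa using sum_bundleDigit lit hdistinct P x
    · have := hP a b
      rwa [sum_filter_satVal, sum_filter_satVal, Nat.cast_inj] at this
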